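/- Assume (A4) and let M > 0. Let h_1,…,h_m be measurable functions from X to ℝ such that for each j the function g_j(z) = ℓ(h_j(x),y) − ℓ(h*(x),y) satisfies |g_j(Z_1)| ≤ M almost surely, E[g_j(Z_1)] ≥ 0 and E[g_j(Z_1)²] ≤ M · E[g_j(Z_1)], and let j* be any random index with values in {1,…,m}. Then there exists a constant C' > 0 depending only on c_γ, c_A and M such that for all ε > 0 and all n ≥ n_0: P{ E[g_{j*}(Z_1)] − (2/n)Σ_{i=1}^n g_{j*}(Z_i) > ε } ≤ m · C exp(−ε φ(n)/C'), where in the probability E[g_{j*}(Z_1)] denotes the expectation evaluated at the (random) index j*. -/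

import Mathlib

open MeasureTheory Real
open scoped BigOperators Classical ENNReal NNReal

noncomputable section

/-! ### Deep (feedforward) neural networks -/

/-- A feedforward neural network with input dimension `d`:
`depth` hidden layers, width vector `width`, weight matrices `weight j` and
shift vectors `bias j` (so that `A_{j+1}(x) = weight j *ᵥ x + bias j`). -/
structure DNN (d : ℕ) where
  depth : ℕ
  width : ℕ → ℕ
  weight : (j : ℕ) → Matrix (Fin (width (j + 1))) (Fin (width j)) ℝ
  bias : (j : ℕ) → Fin (width (j + 1)) → ℝ
  width_zero : width 0 = d
  width_last : width (depth + 1) = 1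

namespace DNN

variable {d : ℕ}

/-- Output of the `j`-th hidden layer: `σ_j ∘ A_j ∘ ⋯ ∘ σ_1 ∘ A_1`. -/
def hidden (σ : ℝ → ℝ) (net : DNN d) :
    (j : ℕ) → (Fin (net.width 0) → ℝ) → Fin (net.width j) → ℝ
  | 0, x => x
  | j + 1, x => fun i => σ (((net.weight j).mulVec (hidden σ net j x)) i + net.bias j i)

/-- The function `ℝ^d → ℝ` computed by the network:
`A_{L+1} ∘ σ_L ∘ A_L ∘ ⋯ ∘ σ_1 ∘ A_1` (no activation on the output layer). -/
def realize (σ : ℝ → ℝ) (net : DNN d) (x : Fin d → ℝ) : ℝ :=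
  (((net.weight net.depth).mulVec
      (hidden σ net net.depth fun i => x (Fin.cast net.width_zero i))) +
    net.bias net.depth) (Fin.cast net.width_last.symm 0)

/-- `‖θ(h)‖_∞ ≤ B` : all network parameters are bounded by `B`. -/
def paramBound (net : DNN d) (B : ℝ) : Prop :=
  ∀ j ≤ net.depth, (∀ i k, |net.weight j i k| ≤ B) ∧ ∀ i, |net.bias j i| ≤ B

/-- `‖θ(h)‖₀` : the number of nonzero parameters of the network. -/
def sparsity (net : DNN d) : ℕ :=
  ∑ j ∈ Finset.range (net.depth + 1),
    (((Finset.univ : Finset (Fin (net.width (j + 1)) × Fin (net.width j))).filter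
        fun p => net.weight j p.1 p.2 ≠ 0).card +
      ((Finset.univ : Finset (Fin (net.width (j + 1)))).filter fun i => net.bias j i ≠ 0).card)

end DNN

/-- The networks realizing the class `H_σ(L, N, B, F)` (depth ≤ L, width ≤ N,
`‖θ‖_∞ ≤ B`, `‖h‖_{∞,X} ≤ F`). -/
def netClass (σ : ℝ → ℝ) (d : ℕ) (X : Set (Fin d → ℝ)) (L N B F : ℝ) : Set (DNN d) :=
  {net | (net.depth : ℝ) ≤ L ∧ (∀ j, 1 ≤ j → j ≤ net.depth → (net.width j : ℝ) ≤ N) ∧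
    net.paramBound B ∧ ∀ x ∈ X, |net.realize σ x| ≤ F}

/-- The networks realizing the sparsity constrained class `H_σ(L, N, B, F, S)`. -/
def netClassS (σ : ℝ → ℝ) (d : ℕ) (X : Set (Fin d → ℝ)) (L N B F S : ℝ) : Set (DNN d) :=
  {net | net ∈ netClass σ d X L N B F ∧ (net.sparsity : ℝ) ≤ S}

/-- The class of DNN predictors `H_σ(L, N, B, F)`. -/
def HClass (σ : ℝ → ℝ) (d : ℕ) (X : Set (Fin d → ℝ)) (L N B F : ℝ) :
    Set ((Fin d → ℝ) → ℝ) :=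
  {h | ∃ net ∈ netClass σ d X L N B F, h = net.realize σ}

/-- The sparsity constrained class of DNN predictors `H_σ(L, N, B, F, S)`. -/
def HClassS (σ : ℝ → ℝ) (d : ℕ) (X : Set (Fin d → ℝ)) (L N B F S : ℝ) :
    Set ((Fin d → ℝ) → ℝ) :=
  {h | ∃ net ∈ netClassS σ d X L N B F S, h = net.realize σ}

/-! ### Hölder balls -/

/-- The largest integer strictly smaller than `β` (for `β > 0`). -/
def sfloor (β : ℝ) : ℕ := ⌈β⌉₊ - 1

/-- Partial derivative in the `i`-th coordinate. -/
def pderiv {m : ℕ} (i : Fin m) (h : (Fin m → ℝ) → ℝ) : (Fin m → ℝ) → ℝ :=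
  fun x => deriv (fun t => h (Function.update x i t)) (x i)

/-- `∂^α h` for a multi-index `α`. -/
def multiPderiv {m : ℕ} (α : Fin m → ℕ) (h : (Fin m → ℝ) → ℝ) : (Fin m → ℝ) → ℝ :=
  (List.finRange m).foldr (fun i f => (pderiv i)^[α i] f) h

/-- The Hölder norm of `h` on the domain `D`. -/
def holderNorm {m : ℕ} (D : Set (Fin m → ℝ)) (β : ℝ) (h : (Fin m → ℝ) → ℝ) : ℝ :=
  (∑ α ∈ (Fintype.piFinset fun _ : Fin m => Finset.range (sfloor β + 1)).filter
      (fun α => ((∑ i, α i : ℕ) : ℝ) < β),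
      ⨆ x ∈ D, |multiPderiv α h x|) +
  ∑ α ∈ (Fintype.piFinset fun _ : Fin m => Finset.range (sfloor β + 1)).filter
      (fun α => (∑ i, α i) = sfloor β),
      ⨆ x ∈ D, ⨆ y ∈ D, ⨆ _ : x ≠ y,
        |multiPderiv α h x - multiPderiv α h y| / ‖x - y‖ ^ (β - (sfloor β : ℝ))

/-- The ball of `β`-Hölder functions on `D` with radius `A`. -/
def holderBall {m : ℕ} (D : Set (Fin m → ℝ)) (β A : ℝ) : Set ((Fin m → ℝ) → ℝ) :=
  {h | holderNorm D β h ≤ A}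

/-! ### Composition Hölder functions -/

/-- The cube `[l,u]^m`. -/
def cube (m : ℕ) (l u : ℝ) : Set (Fin m → ℝ) := {x | ∀ i, x i ∈ Set.Icc l u}

/-- `f` depends on at most `t` of its coordinates. -/
def dependsOnAtMost {m : ℕ} (t : ℕ) (f : (Fin m → ℝ) → ℝ) : Prop :=
  ∃ T : Finset (Fin m), T.card ≤ t ∧ ∀ x y : Fin m → ℝ, (∀ i ∈ T, x i = y i) → f x = f y

/-- Composition `g_{i-1} ∘ ⋯ ∘ g_0`. -/
def chainComp (dv : ℕ → ℕ) (g : (i : ℕ) → (Fin (dv i) → ℝ) → Fin (dv (i + 1)) → ℝ) :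
    (i : ℕ) → (Fin (dv 0) → ℝ) → Fin (dv i) → ℝ
  | 0, x => x
  | i + 1, x => g i (chainComp dv g i x)

/-- The class `G(q, d, t, β, A)` of composition Hölder functions. -/
def compClass (q dIn : ℕ) (dv tv : ℕ → ℕ) (βv : ℕ → ℝ) (A : ℝ)
    (hd0 : dv 0 = dIn) (hdq : dv (q + 1) = 1) : Set ((Fin dIn → ℝ) → ℝ) :=
  {h | ∃ (l u : ℕ → ℝ) (g : (i : ℕ) → (Fin (dv i) → ℝ) → Fin (dv (i + 1)) → ℝ),
    (∀ i ≤ q + 1, |l i| ≤ A ∧ |u i| ≤ A ∧ l i ≤ u i) ∧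
    (∀ i ≤ q, ∀ x ∈ cube (dv i) (l i) (u i), ∀ j, g i x j ∈ Set.Icc (l (i + 1)) (u (i + 1))) ∧
    (∀ i ≤ q, ∀ j, dependsOnAtMost (tv i) (fun x => g i x j) ∧
      (fun x => g i x j) ∈ holderBall (cube (dv i) (l i) (u i)) (βv i) A) ∧
    ∀ x : Fin dIn → ℝ,
      h x = chainComp dv g (q + 1) (fun k => x (Fin.cast hd0 k)) (Fin.cast hdq.symm 0)}

/-- The effective smoothness `β_i* = β_i ∏_{j=i+1}^q (β_j ∧ 1)`. -/
def betaStar (q : ℕ) (βv : ℕ → ℝ) (i : ℕ) : ℝ :=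
  βv i * ∏ j ∈ Finset.Icc (i + 1) q, min (βv j) 1

/-- `φ_{n,φ} = max_{0 ≤ i ≤ q} x^{-2β_i*/(2β_i* + t_i)}` evaluated at `x`. -/
def phiRate (q : ℕ) (βv : ℕ → ℝ) (tv : ℕ → ℕ) (x : ℝ) : ℝ :=
  (Finset.range (q + 1)).sup'
    (Finset.nonempty_range_iff.mpr (Nat.succ_ne_zero q))
    fun i => x ^ (-(2 * betaStar q βv i) / (2 * betaStar q βv i + tv i))

/-! ### Activation functions : assumption (A1) -/

/-- `g` is affine on the set `s`. -/
def AffineOn (g : ℝ → ℝ) (s : Set ℝ) : Prop := ∃ a b : ℝ, ∀ x ∈ s, g x = a * x + b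

/-- Continuous piecewise linear function. -/
def PiecewiseLinear (g : ℝ → ℝ) : Prop :=
  Continuous g ∧
    ∃ (K : ℕ) (a : ℕ → ℝ), 0 < K ∧ (∀ k, k + 1 < K → a k ≤ a (k + 1)) ∧
      (∀ k < K, derivWithin g (Set.Iio (a k)) (a k) ≠ derivWithin g (Set.Ioi (a k)) (a k)) ∧
      AffineOn g (Set.Iic (a 0)) ∧ AffineOn g (Set.Ici (a (K - 1))) ∧
      ∀ k, k + 1 < K → AffineOn g (Set.Icc (a k) (a (k + 1)))

/-- Locally quadratic function. -/
def LocallyQuadratic (g : ℝ → ℝ) : Prop :=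
  ∃ a b : ℝ, a < b ∧ ContDiffOn ℝ 3 g (Set.Ioo a b) ∧
    (∃ M : ℝ, ∀ x ∈ Set.Ioo a b, ∀ n ≤ 3, |iteratedDerivWithin n g (Set.Ioo a b) x| ≤ M) ∧
    ∃ t ∈ Set.Ioo a b, deriv g t ≠ 0 ∧ deriv (deriv g) t ≠ 0

/-- Assumption (A1) on the activation function. -/
def AssumptionA1 (σ : ℝ → ℝ) (Cσ : ℝ) : Prop :=
  0 < Cσ ∧ (∀ x y : ℝ, |σ x - σ y| ≤ Cσ * |x - y|) ∧
    (PiecewiseLinear σ ∨ LocallyQuadratic σ) ∧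
    ∃ v w : ℝ, v < w ∧ Set.Icc v w ⊆ Set.Icc (0 : ℝ) 1 ∧ ∀ z ∈ Set.Icc v w, σ z = z

/-! ### Risks, estimators, penalties -/

/-- The risk `R(h) = E[ℓ(h(X₀), Y₀)]`. -/
def risk {Ω : Type*} [MeasurableSpace Ω] (P : Measure Ω) {d : ℕ}
    (Z : ℤ → Ω → (Fin d → ℝ) × ℝ) (ℓ : ℝ → ℝ → ℝ) (h : (Fin d → ℝ) → ℝ) : ℝ :=
  ∫ ω, ℓ (h (Z 0 ω).1) (Z 0 ω).2 ∂P

/-- The empirical risk `(1/n) ∑_{i=1}^n ℓ(h(X_i), Y_i)`. -/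
def empRisk {Ω : Type*} {d : ℕ} (Z : ℤ → Ω → (Fin d → ℝ) × ℝ) (ℓ : ℝ → ℝ → ℝ)
    (n : ℕ) (h : (Fin d → ℝ) → ℝ) (ω : Ω) : ℝ :=
  (n : ℝ)⁻¹ * ∑ i ∈ Finset.Icc 1 n, ℓ (h (Z i ω).1) (Z i ω).2

/-- `g(h, z) = ℓ(h(x), y) - ℓ(h*(x), y)` for `z = (x, y)`. -/
def lossDiff {d : ℕ} (ℓ : ℝ → ℝ → ℝ) (hstar h : (Fin d → ℝ) → ℝ)
    (z : (Fin d → ℝ) × ℝ) : ℝ :=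
  ℓ (h z.1) z.2 - ℓ (hstar z.1) z.2

/-- The sparse penalty `J_n(h) = ∑_j π(|θ_j(h)|)`. -/
def penalty {d : ℕ} (pen : ℝ → ℝ) (net : DNN d) : ℝ :=
  ∑ j ∈ Finset.range (net.depth + 1),
    ((∑ i, ∑ k, pen |net.weight j i k|) + ∑ i, pen |net.bias j i|)

/-- The sparsity constrained class with the architecture of the NPDNN Hölder theorem,
with size parameter `r` (i.e. `r = φ(n)`). -/
def archClassR (σ : ℝ → ℝ) (d : ℕ) (X : Set (Fin d → ℝ)) (κ s L₀ N₀ B₀ S₀ F r : ℝ) :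
    Set ((Fin d → ℝ) → ℝ) :=
  HClassS σ d X (s * L₀ / (κ * s + d) * Real.log r)
    (N₀ * r ^ ((d : ℝ) / (κ * s + d)))
    (B₀ * r ^ (4 * ((d : ℝ) + s) / (κ * s + d)))
    F
    (s * S₀ / (κ * s + d) * r ^ ((d : ℝ) / (κ * s + d)) * Real.log r)

/-- `u_n ≲ v_n`. -/
def Lesssim (u v : ℕ → ℝ) : Prop := ∃ c : ℝ, 0 < c ∧ ∀ n, u n ≤ c * v n

/-- `u_n ≍ v_n`. -/
def Asymp (u v : ℕ → ℝ) : Prop := Lesssim u v ∧ Lesssim v u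

/-! ### Covering numbers, mixing coefficients, Huber loss -/

/-- `ε`-covering number of a class of real valued functions (w.r.t. the sup norm). -/
def coveringNumber {α : Type*} (G : Set (α → ℝ)) (ε : ℝ) : ℕ∞ :=
  sInf ((↑) '' {k : ℕ | ∃ f : Fin k → α → ℝ, ∀ g ∈ G, ∃ i, ∀ x, |g x - f i x| ≤ ε})

/-- σ-algebra generated by `Z_t, t ≤ 0`. -/
def pastSigma {Ω E : Type*} [MeasurableSpace E] (Z : ℤ → Ω → E) : MeasurableSpace Ω :=
  ⨆ t : {t : ℤ // t ≤ 0}, MeasurableSpace.comap (Z t) inferInstance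

/-- σ-algebra generated by `Z_t, t ≥ k`. -/
def futureSigma {Ω E : Type*} [MeasurableSpace E] (Z : ℤ → Ω → E) (k : ℕ) :
    MeasurableSpace Ω :=
  ⨆ t : {t : ℤ // (k : ℤ) ≤ t}, MeasurableSpace.comap (Z t) inferInstance

/-- The `α`-mixing coefficient of the process `Z`. -/
def alphaMix {Ω E : Type*} [MeasurableSpace Ω] [MeasurableSpace E]
    (P : Measure Ω) (Z : ℤ → Ω → E) (k : ℕ) : ℝ :=
  ⨆ A : {A : Set Ω // MeasurableSet[pastSigma Z] A},
    ⨆ B : {B : Set Ω // MeasurableSet[futureSigma Z k] B},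
      |(P (↑A ∩ ↑B)).toReal - (P ↑A).toReal * (P ↑B).toReal|

/-- The Huber loss with parameter `δ`. -/
def huber (δ : ℝ) (y y' : ℝ) : ℝ :=
  if |y - y'| ≤ δ then (y - y') ^ 2 / 2 else δ * |y - y'| - δ ^ 2 / 2

end

/-!
Fix an index `j` and write `μ_j = E g_j(Z_1)`. On the event in question the average of the
centred variables `μ_j - g_j(Z_i)` is at least `(ε + μ_j) / 2`. Their variance is at most
`E g_j(Z_1)² ≤ M μ_j` and they are bounded by `2M`, so (A4) bounds the probability by
`C exp(-((ε + μ_j)/2)² φ(n) / (cγ M μ_j + cA M (ε + μ_j)))`, and since `ε μ_j` and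
`ε (ε + μ_j)` are at most `(ε + μ_j)²` this is at most `C exp(-ε φ(n) / (4M(cγ + cA)))`,
uniformly in `j`. A union bound over the `m` indices takes care of the random index `j*`.
-/
open Finset

section

variable {Ω E : Type*} [MeasurableSpace Ω] {P : Measure Ω}

/-- Assumption (A4), with effective sample size `φ n`. -/
def BernsteinCondition [MeasurableSpace E] (P : Measure Ω) (Z : ℤ → Ω → E) (φ : ℕ → ℕ)
    (C cγ cA : ℝ) (n₀ : ℕ) : Prop :=
  ∀ (g : E → ℝ) (γ A : ℝ), 0 ≤ γ → 0 < A → Measurable g →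
    (∀ z, |g z| ≤ A) → (∫ ω, g (Z 1 ω) ∂P) = 0 → (∫ ω, g (Z 1 ω) ^ 2 ∂P) ≤ γ ^ 2 →
    ∀ ε : ℝ, 0 < ε → ∀ n : ℕ, n₀ ≤ n →
      (P {ω | ε ≤ (n : ℝ)⁻¹ * ∑ i ∈ Icc 1 n, g (Z i ω)}).toReal ≤
        C * Real.exp (-(ε ^ 2 * (φ n : ℝ)) / (cγ * γ ^ 2 + cA * ε * A))

lemma measurable_lossDiff {d : ℕ} {ℓ : ℝ → ℝ → ℝ}
    (hℓ : Measurable fun p : ℝ × ℝ => ℓ p.1 p.2) {hstar h : (Fin d → ℝ) → ℝ} (hstar_meas : Measurable hstar) (h_meas : Measurable h) :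
    Measurable (lossDiff ℓ hstar h) :=
  (hℓ.comp ((h_meas.comp measurable_fst).prodMk measurable_snd)).sub
    (hℓ.comp ((hstar_meas.comp measurable_fst).prodMk measurable_snd))

lemma ae_of_ae_of_shift {Z : ℤ → Ω → E} {T : Ω → Ω}
    (hT : MeasurePreserving T P P) (hTZ : ∀ t ω, Z (t + 1) ω = Z t (T ω)) {p : E → Prop}
    {t : ℤ} (h : ∀ᵐ ω ∂P, p (Z t ω)) (k : ℕ) : ∀ᵐ ω ∂P, p (Z (t + k) ω) := by
  induction k with
  | zero => simpa using h
  | succ k ih =>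
    filter_upwards [hT.quasiMeasurePreserving.ae ih] with ω hω
    rwa [Nat.cast_succ, ← add_assoc, hTZ]

lemma exists_bounded_ae_eq_of_shift [MeasurableSpace E] {Z : ℤ → Ω → E} {T : Ω → Ω}
    (hT : MeasurePreserving T P P) (hTZ : ∀ t ω, Z (t + 1) ω = Z t (T ω)) {f : E → ℝ}
    (hf : Measurable f) {M : ℝ} (hM : 0 ≤ M) (hfM : ∀ᵐ ω ∂P, |f (Z 1 ω)| ≤ M) :
    ∃ g : E → ℝ, Measurable g ∧ (∀ z, |g z| ≤ M) ∧
      ∀ᵐ ω ∂P, ∀ i : ℕ, 1 ≤ i → g (Z i ω) = f (Z i ω) := by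
  refine ⟨fun z => max (-M) (min M (f z)), measurable_const.max (measurable_const.min hf),
    fun z => abs_le.2 ⟨le_max_left _ _, max_le (by linarith) (min_le_left _ _)⟩, ?_⟩
  filter_upwards [ae_all_iff.2 (ae_of_ae_of_shift hT hTZ (p := fun z => |f z| ≤ M) hfM)]
    with ω hω i hi
  obtain ⟨k, rfl⟩ := Nat.exists_eq_add_of_le hi
  obtain ⟨hlow, hup⟩ := abs_le.1 (by exact_mod_cast hω k)
  rw [min_eq_right hup, max_eq_right hlow]

lemma measureReal_setOf_mem_le_card_mul [IsFiniteMeasure P] {ι : Type*} [Fintype ι]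
    (S : ι → Set Ω) (J : Ω → ι) {b : ℝ} (hb : ∀ i, P.real (S i) ≤ b) :
    P.real {ω | ω ∈ S (J ω)} ≤ Fintype.card ι * b :=
  calc P.real {ω | ω ∈ S (J ω)} ≤ P.real (⋃ i, S i) :=
        measureReal_mono fun ω hω => Set.mem_iUnion.2 ⟨J ω, hω⟩
    _ ≤ ∑ i, P.real (S i) := measureReal_iUnion_fintype_le S
    _ ≤ ∑ _i : ι, b := sum_le_sum fun i _ => hb i
    _ = Fintype.card ι * b := by simp

lemma bernstein_exponent_le {cγ cA M μ ε k : ℝ} (hcγ : 0 ≤ cγ) (hcA : 0 < cA) (hM : 0 < M)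
    (hμ : 0 ≤ μ) (hε : 0 < ε) (hk : 0 ≤ k) :
    -(((ε + μ) / 2) ^ 2 * k) / (cγ * (M * μ) + cA * ((ε + μ) / 2) * (2 * M)) ≤
      -(ε * k) / (4 * M * (cγ + cA)) := by
  rw [neg_div, neg_div, neg_le_neg_iff, div_le_div_iff₀ (by positivity) (by positivity)]
  have h1 : ε * μ ≤ (ε + μ) ^ 2 := by nlinarith
  have h2 : ε * (ε + μ) ≤ (ε + μ) ^ 2 := by nlinarith
  have := add_le_add (mul_le_mul_of_nonneg_left h1 hcγ) (mul_le_mul_of_nonneg_left h2 hcA.le)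
  have hMk : 0 ≤ M * k := by positivity
  nlinarith [mul_le_mul_of_nonneg_left this hMk]

lemma BernsteinCondition.measureReal_deviation_le [MeasurableSpace E] [IsProbabilityMeasure P]
    {Z : ℤ → Ω → E} {φ : ℕ → ℕ} {C cγ cA : ℝ} {n₀ : ℕ}
    (hA4 : BernsteinCondition P Z φ C cγ cA n₀) (hC : 0 ≤ C) (hcγ : 0 ≤ cγ) (hcA : 0 < cA)
    (hZ : Measurable (Z 1)) {g : E → ℝ} (hg : Measurable g) {M : ℝ} (hM : 0 < M)
    (hgM : ∀ z, |g z| ≤ M) (hmean : 0 ≤ ∫ ω, g (Z 1 ω) ∂P)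
    (hvar : ∫ ω, g (Z 1 ω) ^ 2 ∂P ≤ M * ∫ ω, g (Z 1 ω) ∂P) {ε : ℝ} (hε : 0 < ε) {n : ℕ}
    (hn₀ : n₀ ≤ n) (hn : n ≠ 0) :
    P.real {ω | ε < (∫ ω', g (Z 1 ω') ∂P) - 2 * ((n : ℝ)⁻¹ * ∑ i ∈ Icc 1 n, g (Z i ω))} ≤
      C * Real.exp (-(ε * (φ n : ℝ)) / (4 * M * (cγ + cA))) := by
  set μ := ∫ ω, g (Z 1 ω) ∂P
  have hg_meas : AEStronglyMeasurable (fun ω => g (Z 1 ω)) P :=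
    (hg.comp hZ).aestronglyMeasurable
  have hg_int : Integrable (fun ω => g (Z 1 ω)) P :=
    .of_bound hg_meas M (ae_of_all _ fun ω => hgM _)
  have hμM : μ ≤ M := (le_abs_self μ).trans <| by
    simpa using norm_integral_le_of_norm_le_const (μ := P)
      (ae_of_all _ fun ω => (Real.norm_eq_abs (g (Z 1 ω))).trans_le (hgM (Z 1 ω)))
  have hcentered : ∫ ω, (μ - g (Z 1 ω)) ∂P = 0 := by
    simp [integral_sub (integrable_const μ) hg_int, μ]
  have hsecond : ∫ ω, (μ - g (Z 1 ω)) ^ 2 ∂P ≤ Real.sqrt (M * μ) ^ 2 := by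
    rw [Real.sq_sqrt (by positivity)]
    calc ∫ ω, (μ - g (Z 1 ω)) ^ 2 ∂P
        = ProbabilityTheory.variance (fun ω => g (Z 1 ω)) P := by
          rw [ProbabilityTheory.variance_eq_integral hg_meas.aemeasurable]
          exact integral_congr_ae (ae_of_all _ fun ω => by ring)
      _ ≤ ∫ ω, g (Z 1 ω) ^ 2 ∂P :=
          ProbabilityTheory.variance_le_expectation_sq hg_meas
      _ ≤ M * μ := hvar
  have hbound : ∀ z, |μ - g z| ≤ 2 * M := fun z => by
    have := abs_le.1 (hgM z); exact abs_le.2 ⟨by linarith, by linarith⟩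
  have hdev := hA4 (fun z => μ - g z) _ _ (Real.sqrt_nonneg _) (by positivity)
    (measurable_const.sub hg) hbound hcentered hsecond ((ε + μ) / 2) (by positivity) n hn₀
  rw [Real.sq_sqrt (by positivity)] at hdev
  have havg : ∀ ω, (n : ℝ)⁻¹ * ∑ i ∈ Icc 1 n, (μ - g (Z i ω)) =
      μ - (n : ℝ)⁻¹ * ∑ i ∈ Icc 1 n, g (Z i ω) := fun ω => by
    rw [sum_sub_distrib, sum_const, Nat.card_Icc, Nat.add_sub_cancel, nsmul_eq_mul, mul_sub,
      inv_mul_cancel_left₀ (Nat.cast_ne_zero.2 hn)]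
  calc P.real {ω | ε < μ - 2 * ((n : ℝ)⁻¹ * ∑ i ∈ Icc 1 n, g (Z i ω))}
      ≤ P.real {ω | (ε + μ) / 2 ≤ (n : ℝ)⁻¹ * ∑ i ∈ Icc 1 n, (μ - g (Z i ω))} :=
        measureReal_mono fun ω hω => by
          simp only [Set.mem_ofPred_eq, havg] at hω ⊢; linarith
    _ ≤ C * Real.exp (-(((ε + μ) / 2) ^ 2 * (φ n : ℝ)) /
          (cγ * (M * μ) + cA * ((ε + μ) / 2) * (2 * M))) := hdev
    _ ≤ C * Real.exp (-(ε * (φ n : ℝ)) / (4 * M * (cγ + cA))) :=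
        mul_le_mul_of_nonneg_left (Real.exp_le_exp.2 <|
          bernstein_exponent_le hcγ hcA hM hmean hε (Nat.cast_nonneg _)) hC

end

theorem stmt9_general
    {Ω : Type*} [MeasurableSpace Ω] (P : Measure Ω) [IsProbabilityMeasure P]
    (d : ℕ)
    (Z : ℤ → Ω → (Fin d → ℝ) × ℝ) (hZmeas : ∀ t, Measurable (Z t))
    (T : Ω → Ω) (hT : Ergodic T P) (hTZ : ∀ t ω, Z (t + 1) ω = Z t (T ω))
    (ℓ : ℝ → ℝ → ℝ) (hℓmeas : Measurable fun p : ℝ × ℝ => ℓ p.1 p.2)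
    (hstar : (Fin d → ℝ) → ℝ) (hstarMeas : Measurable hstar)
    (φ : ℕ → ℕ)
    (C cγ cA : ℝ) (hC : 0 < C) (hcγ : 0 < cγ) (hcA : 0 < cA)
    (n₀ : ℕ) (hn₀ : 1 ≤ n₀)
    (hA4 : ∀ (g : (Fin d → ℝ) × ℝ → ℝ) (γ A : ℝ), 0 ≤ γ → 0 < A → Measurable g →
      (∀ z, |g z| ≤ A) → (∫ ω, g (Z 1 ω) ∂P) = 0 → (∫ ω, g (Z 1 ω) ^ 2 ∂P) ≤ γ ^ 2 →
      ∀ ε : ℝ, 0 < ε → ∀ n : ℕ, n₀ ≤ n →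
        (P {ω | ε ≤ (n : ℝ)⁻¹ * ∑ i ∈ Finset.Icc 1 n, g (Z i ω)}).toReal ≤
          C * Real.exp (-(ε ^ 2 * (φ n : ℝ)) / (cγ * γ ^ 2 + cA * ε * A)))
    (M : ℝ) (hM : 0 < M) :
    ∃ C' : ℝ, 0 < C' ∧ ∀ (m : ℕ) (hj : Fin m → (Fin d → ℝ) → ℝ),
      (∀ j, Measurable (hj j)) →
      (∀ j, ∀ᵐ ω ∂P, |lossDiff ℓ hstar (hj j) (Z 1 ω)| ≤ M) →
      (∀ j, 0 ≤ (∫ ω, lossDiff ℓ hstar (hj j) (Z 1 ω) ∂P)) →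
      (∀ j, (∫ ω, lossDiff ℓ hstar (hj j) (Z 1 ω) ^ 2 ∂P) ≤
        M * ∫ ω, lossDiff ℓ hstar (hj j) (Z 1 ω) ∂P) →
      ∀ jstar : Ω → Fin m, ∀ ε : ℝ, 0 < ε → ∀ n : ℕ, n₀ ≤ n →
        (P {ω | (∫ ω', lossDiff ℓ hstar (hj (jstar ω)) (Z 1 ω') ∂P) -
            2 * ((n : ℝ)⁻¹ * ∑ i ∈ Finset.Icc 1 n,
              lossDiff ℓ hstar (hj (jstar ω)) (Z i ω)) > ε}).toReal ≤
          (m : ℝ) * C * Real.exp (-(ε * (φ n : ℝ)) / C') := by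
  refine ⟨4 * M * (cγ + cA), by positivity, ?_⟩
  intro m hj hj_meas hbdd hmean hvar jstar ε hε n hn
  -- (A4) only applies to functions bounded everywhere, hence the truncation
  choose g hg_meas hg_bdd hg_eq using fun j => exists_bounded_ae_eq_of_shift
    hT.toMeasurePreserving hTZ (measurable_lossDiff hℓmeas hstarMeas (hj_meas j)) hM.le (hbdd j)
  have hg_int : ∀ j, ∫ ω, g j (Z 1 ω) ∂P = ∫ ω, lossDiff ℓ hstar (hj j) (Z 1 ω) ∂P :=
    fun j => integral_congr_ae <| (hg_eq j).mono fun ω h => h 1 le_rfl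
  have hg_sq : ∀ j, ∫ ω, g j (Z 1 ω) ^ 2 ∂P = ∫ ω, lossDiff ℓ hstar (hj j) (Z 1 ω) ^ 2 ∂P :=
    fun j => integral_congr_ae <| (hg_eq j).mono fun ω h => congrArg (· ^ 2) (h 1 le_rfl)
  have hdev : ∀ j, P.real {ω | ε < (∫ ω', lossDiff ℓ hstar (hj j) (Z 1 ω') ∂P) -
      2 * ((n : ℝ)⁻¹ * ∑ i ∈ Icc 1 n, g j (Z i ω))} ≤
      C * Real.exp (-(ε * (φ n : ℝ)) / (4 * M * (cγ + cA))) := fun j => by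
    rw [← hg_int]
    exact BernsteinCondition.measureReal_deviation_le hA4 hC.le hcγ.le hcA (hZmeas 1)
      (hg_meas j) hM (hg_bdd j) ((hg_int j).symm ▸ hmean j)
      (by rw [hg_sq, hg_int]; exact hvar j) hε hn (by omega)
  calc P.real _ = P.real {ω | ε < (∫ ω', lossDiff ℓ hstar (hj (jstar ω)) (Z 1 ω') ∂P) -
        2 * ((n : ℝ)⁻¹ * ∑ i ∈ Icc 1 n, g (jstar ω) (Z i ω))} := by
        refine measureReal_congr (Filter.eventuallyEq_set.2 ?_)
        filter_upwards [ae_all_iff.2 hg_eq] with ω hω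
        rw [gt_iff_lt, sum_congr rfl fun i hi => (hω (jstar ω) i (mem_Icc.1 hi).1).symm]
    _ ≤ Fintype.card (Fin m) * (C * Real.exp (-(ε * (φ n : ℝ)) / (4 * M * (cγ + cA)))) :=
        measureReal_setOf_mem_le_card_mul _ jstar hdev
    _ = _ := by rw [Fintype.card_fin]; ring

theorem stmt9
    {Ω : Type*} [MeasurableSpace Ω] (P : Measure Ω) [IsProbabilityMeasure P]
    (d : ℕ) (hd : 0 < d)
    (Z : ℤ → Ω → (Fin d → ℝ) × ℝ) (hZmeas : ∀ t, Measurable (Z t))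
    (Xset : Set (Fin d → ℝ)) (Yset : Set ℝ)
    (hZmem : ∀ t ω, (Z t ω).1 ∈ Xset ∧ (Z t ω).2 ∈ Yset)
    (T : Ω → Ω) (hT : Ergodic T P) (hTZ : ∀ t ω, Z (t + 1) ω = Z t (T ω))
    (ℓ : ℝ → ℝ → ℝ) (hℓmeas : Measurable fun p : ℝ × ℝ => ℓ p.1 p.2)
    (hℓnonneg : ∀ u y, 0 ≤ ℓ u y)
    (hstar : (Fin d → ℝ) → ℝ) (hstarMeas : Measurable hstar)
    (hstarMem : ∀ x ∈ Xset, hstar x ∈ Yset)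
    (hstarMin : ∀ h : (Fin d → ℝ) → ℝ, Measurable h → (∀ x ∈ Xset, h x ∈ Yset) →
      risk P Z ℓ hstar ≤ risk P Z ℓ h)
    (φ : ℕ → ℕ) (hφmono : Monotone φ) (hφle : ∀ n, φ n ≤ n) (hφpos : ∀ n, 1 ≤ φ n)
    (C cγ cA : ℝ) (hC : 0 < C) (hcγ : 0 < cγ) (hcA : 0 < cA)
    (n₀ : ℕ) (hn₀ : 1 ≤ n₀)
    (hA4 : ∀ (g : (Fin d → ℝ) × ℝ → ℝ) (γ A : ℝ), 0 ≤ γ → 0 < A → Measurable g →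
      (∀ z, |g z| ≤ A) → (∫ ω, g (Z 1 ω) ∂P) = 0 → (∫ ω, g (Z 1 ω) ^ 2 ∂P) ≤ γ ^ 2 →
      ∀ ε : ℝ, 0 < ε → ∀ n : ℕ, n₀ ≤ n →
        (P {ω | ε ≤ (n : ℝ)⁻¹ * ∑ i ∈ Finset.Icc 1 n, g (Z i ω)}).toReal ≤
          C * Real.exp (-(ε ^ 2 * (φ n : ℝ)) / (cγ * γ ^ 2 + cA * ε * A)))
    (M : ℝ) (hM : 0 < M) :
    ∃ C' : ℝ, 0 < C' ∧ ∀ (m : ℕ) (hj : Fin m → (Fin d → ℝ) → ℝ),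
      (∀ j, Measurable (hj j)) →
      (∀ j, ∀ᵐ ω ∂P, |lossDiff ℓ hstar (hj j) (Z 1 ω)| ≤ M) →
      (∀ j, 0 ≤ (∫ ω, lossDiff ℓ hstar (hj j) (Z 1 ω) ∂P)) →
      (∀ j, (∫ ω, lossDiff ℓ hstar (hj j) (Z 1 ω) ^ 2 ∂P) ≤
        M * ∫ ω, lossDiff ℓ hstar (hj j) (Z 1 ω) ∂P) →
      ∀ jstar : Ω → Fin m, ∀ ε : ℝ, 0 < ε → ∀ n : ℕ, n₀ ≤ n →
        (P {ω | (∫ ω', lossDiff ℓ hstar (hj (jstar ω)) (Z 1 ω') ∂P) -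
            2 * ((n : ℝ)⁻¹ * ∑ i ∈ Finset.Icc 1 n,
              lossDiff ℓ hstar (hj (jstar ω)) (Z i ω)) > ε}).toReal ≤
          (m : ℝ) * C * Real.exp (-(ε * (φ n : ℝ)) / C') :=
  stmt9_general P d Z hZmeas T hT hTZ ℓ hℓmeas hstar hstarMeas φ C cγ cA hC hcγ hcA n₀ hn₀ hA4 M hM
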